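/- Let A ∈ ℂ^{m×n} (m ≥ n) with compact SVD A = UΣV*, let r be a rational (or continuous) function with 0 ≤ r(x) ≤ 1 on [0, σ₁(A)], and set W̃ = U r(Σ) V*, H̃ = W̃* A = V Σ r(Σ) V*. Then H̃ is Hermitian positive semidefinite, ‖H̃ − (A*A)^{1/2}‖₂ = max_j |σ_j(A) r(σ_j(A)) − σ_j(A)|, and ‖W̃ H̃ − A‖₂ = max_j |σ_j(A) r(σ_j(A))² − σ_j(A)|. -/

import Mathlib

open scoped Matrix Matrix.Norms.L2Operator ComplexOrder

namespace Matrix.PosSemidef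

/-- The positive semidefinite square root of a positive semidefinite matrix, as defined in
Mathlib (December 2024); it has since been removed from Mathlib. -/
noncomputable def sqrt {n 𝕜 : Type*} [Fintype n] [DecidableEq n] [RCLike 𝕜] {A : Matrix n n 𝕜}
    (hA : A.PosSemidef) : Matrix n n 𝕜 :=
  hA.isHermitian.eigenvectorUnitary.1 *
    Matrix.diagonal ((↑) ∘ Real.sqrt ∘ hA.isHermitian.eigenvalues) *
    (star hA.isHermitian.eigenvectorUnitary : Matrix n n 𝕜)

end Matrix.PosSemidef

lemma aux_sqrt_eq {k : ℕ} (S B : Matrix (Fin k) (Fin k) ℂ) (hS : S.PosSemidef)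
    (hB : B.PosSemidef) (h : S ^ 2 = B) : hB.sqrt = S := by
  have e1 : hB.sqrt = cfc Real.sqrt B := by rw [hB.isHermitian.cfc_eq]; rfl
  rw [e1, ← h, ← cfc_comp_pow Real.sqrt 2 S (ha := hS.isHermitian.isSelfAdjoint)]
  conv_rhs => rw [← cfc_id' ℝ S (ha := hS.isHermitian.isSelfAdjoint)]
  apply cfc_congr
  intro x hx
  obtain ⟨i, rfl⟩ := hS.isHermitian.spectrum_real_eq_range_eigenvalues ▸ hx
  exact Real.sqrt_sq (hS.eigenvalues_nonneg i)

lemma aux_norm_diagonal {n : ℕ} (hn : 0 < n) (d : Fin n → ℂ) :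
    ‖(Matrix.diagonal d : Matrix (Fin n) (Fin n) ℂ)‖ =
      Finset.univ.sup' ⟨⟨0, hn⟩, Finset.mem_univ _⟩ (fun j => ‖d j‖) := by
  set M := Finset.univ.sup' ⟨⟨0, hn⟩, Finset.mem_univ _⟩ (fun j => ‖d j‖) with hM
  have hM0 : 0 ≤ M := le_trans (norm_nonneg (d ⟨0, hn⟩))
    (Finset.le_sup' (fun j => ‖d j‖) (Finset.mem_univ (⟨0, hn⟩ : Fin n)))
  apply le_antisymm
  · rw [Matrix.l2_opNorm_def]
    apply ContinuousLinearMap.opNorm_le_bound _ hM0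
    intro x
    simp only [LinearEquiv.trans_apply, Matrix.toEuclideanLin_apply,
      LinearMap.coe_toContinuousLinearMap']
    rw [EuclideanSpace.norm_eq]
    have hx : ‖x‖ = Real.sqrt (∑ i, ‖x i‖ ^ 2) := by
      rw [EuclideanSpace.norm_eq]
    rw [hx, ← Real.sqrt_sq hM0, ← Real.sqrt_mul (sq_nonneg M)]
    apply Real.sqrt_le_sqrt
    rw [Finset.mul_sum]
    apply Finset.sum_le_sum
    intro i _
    have happ : (WithLp.toLp 2 (Matrix.diagonal d *ᵥ x.ofLp)).ofLp i = d i * x i :=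
      Matrix.mulVec_diagonal d _ i
    rw [happ, norm_mul, mul_pow]
    exact mul_le_mul_of_nonneg_right
      (pow_le_pow_left₀ (norm_nonneg _)
        (Finset.le_sup' (fun j => ‖d j‖) (Finset.mem_univ i)) 2) (sq_nonneg _)
  · apply Finset.sup'_le
    intro j _
    have h := Matrix.l2_opNorm_mulVec (Matrix.diagonal d) (EuclideanSpace.single j 1)
    rw [EuclideanSpace.norm_single, norm_one, mul_one] at h
    refine le_trans (le_of_eq ?_) h
    have hmv : (Matrix.diagonal d) *ᵥ (WithLp.equiv 2 _ (EuclideanSpace.single j (1:ℂ)))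
        = Pi.single j (d j * 1) := by
      rw [← Matrix.diagonal_mulVec_single]
      rfl
    rw [show ((EuclideanSpace.equiv (Fin n) ℂ).symm <|
        Matrix.diagonal d *ᵥ (EuclideanSpace.single j 1)) =
        (WithLp.equiv 2 _).symm ((Matrix.diagonal d) *ᵥ
          (WithLp.equiv 2 _ (EuclideanSpace.single j (1:ℂ)))) from rfl, hmv]
    rw [mul_one]
    rw [show ((WithLp.equiv 2 (Fin n → ℂ)).symm (Pi.single j (d j)))
        = EuclideanSpace.single j (d j) from rfl]
    rw [EuclideanSpace.norm_single]

lemma aux_norm_mul_left {m n k : ℕ} (U : Matrix (Fin m) (Fin n) ℂ)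
    (hU : Uᴴ * U = 1) (B : Matrix (Fin n) (Fin k) ℂ) : ‖U * B‖ = ‖B‖ := by
  have h1 : ‖U * B‖ * ‖U * B‖ = ‖B‖ * ‖B‖ := by
    rw [← Matrix.l2_opNorm_conjTranspose_mul_self, Matrix.conjTranspose_mul,
      Matrix.mul_assoc, ← Matrix.mul_assoc Uᴴ U B, hU, Matrix.one_mul,
      Matrix.l2_opNorm_conjTranspose_mul_self]
  exact mul_self_inj (norm_nonneg _) (norm_nonneg _) |>.mp h1

lemma aux_norm_mul_right {n k : ℕ} (V : Matrix (Fin n) (Fin n) ℂ)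
    (hV : Vᴴ * V = 1) (B : Matrix (Fin k) (Fin n) ℂ) : ‖B * Vᴴ‖ = ‖B‖ := by
  rw [← Matrix.l2_opNorm_conjTranspose (B * Vᴴ), Matrix.conjTranspose_mul,
    Matrix.conjTranspose_conjTranspose, aux_norm_mul_left V hV,
    Matrix.l2_opNorm_conjTranspose]

/-- Let `A ∈ ℂ^{m×n}` (`m ≥ n`, `n ≥ 1`) have compact SVD `A = U Σ Vᴴ` with
`Σ = diag(σ₁, …, σ_n)`, and let `r` be a continuous function with `0 ≤ r ≤ 1` on
`[0, σ₁(A)]`.  Set `W̃ = U r(Σ) Vᴴ` and `H̃ = V Σ r(Σ) Vᴴ`.  Then `H̃ = W̃ᴴ A` is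
Hermitian positive semidefinite, `‖H̃ − (AᴴA)^{1/2}‖₂ = max_j |σ_j r(σ_j) − σ_j|`,
and `‖W̃ H̃ − A‖₂ = max_j |σ_j r(σ_j)² − σ_j|`. -/
theorem stmt_17 (m n : ℕ) (hmn : n ≤ m) (hn : 0 < n)
    (A : Matrix (Fin m) (Fin n) ℂ)
    (U : Matrix (Fin m) (Fin n) ℂ) (V : Matrix (Fin n) (Fin n) ℂ) (σ : Fin n → ℝ)
    (hU : Uᴴ * U = 1) (hV : V ∈ Matrix.unitaryGroup (Fin n) ℂ)
    (hσ : ∀ j, 0 ≤ σ j)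
    (hSVD : A = U * Matrix.diagonal (fun j => (σ j : ℂ)) * Vᴴ)
    (r : ℝ → ℝ) (hrcont : Continuous r)
    (hr01 : ∀ x ∈ Set.Icc 0 (Finset.univ.sup' ⟨⟨0, hn⟩, Finset.mem_univ _⟩ σ),
      r x ∈ Set.Icc (0 : ℝ) 1)
    (Wt : Matrix (Fin m) (Fin n) ℂ) (Ht : Matrix (Fin n) (Fin n) ℂ)
    (hWt : Wt = U * Matrix.diagonal (fun j => (r (σ j) : ℂ)) * Vᴴ)
    (hHt : Ht = V * Matrix.diagonal (fun j => ((σ j * r (σ j) : ℝ) : ℂ)) * Vᴴ) :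
    Ht = Wtᴴ * A ∧ Ht.PosSemidef ∧
    ‖Ht - (Matrix.posSemidef_conjTranspose_mul_self A).sqrt‖ =
      Finset.univ.sup' ⟨⟨0, hn⟩, Finset.mem_univ _⟩
        (fun j => |σ j * r (σ j) - σ j|) ∧
    ‖Wt * Ht - A‖ =
      Finset.univ.sup' ⟨⟨0, hn⟩, Finset.mem_univ _⟩
        (fun j => |σ j * r (σ j) ^ 2 - σ j|) := by
  have hVc : Vᴴ * V = 1 := by
    simpa [Matrix.star_eq_conjTranspose] using hV.1
  have hrσ : ∀ j, 0 ≤ r (σ j) := by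
    intro j
    exact (hr01 (σ j) ⟨hσ j, Finset.le_sup' σ (Finset.mem_univ j)⟩).1
  -- collapsing lemmas
  have collapseU : ∀ (d e : Fin n → ℂ),
      (U * Matrix.diagonal d * Vᴴ)ᴴ * (U * Matrix.diagonal e * Vᴴ)
        = V * Matrix.diagonal (fun j => star (d j) * e j) * Vᴴ := by
    intro d e
    simp only [Matrix.conjTranspose_mul, Matrix.conjTranspose_conjTranspose,
      Matrix.diagonal_conjTranspose, Matrix.mul_assoc]
    rw [← Matrix.mul_assoc Uᴴ U, hU, Matrix.one_mul,
      ← Matrix.mul_assoc (Matrix.diagonal _) (Matrix.diagonal _) Vᴴ,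
      Matrix.diagonal_mul_diagonal]
    rfl
  have collapseV : ∀ (X : Matrix (Fin m) (Fin n) ℂ) (d e : Fin n → ℂ),
      (X * Matrix.diagonal d * Vᴴ) * (V * Matrix.diagonal e * Vᴴ)
        = X * Matrix.diagonal (fun j => d j * e j) * Vᴴ := by
    intro X d e
    simp only [Matrix.mul_assoc]
    rw [← Matrix.mul_assoc Vᴴ V, hVc, Matrix.one_mul,
      ← Matrix.mul_assoc (Matrix.diagonal _) (Matrix.diagonal _) Vᴴ,
      Matrix.diagonal_mul_diagonal]
  have collapseVsq : ∀ (d e : Fin n → ℂ),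
      (V * Matrix.diagonal d * Vᴴ) * (V * Matrix.diagonal e * Vᴴ)
        = V * Matrix.diagonal (fun j => d j * e j) * Vᴴ := by
    intro d e
    simp only [Matrix.mul_assoc]
    rw [← Matrix.mul_assoc Vᴴ V, hVc, Matrix.one_mul,
      ← Matrix.mul_assoc (Matrix.diagonal _) (Matrix.diagonal _) Vᴴ,
      Matrix.diagonal_mul_diagonal]
  -- Part 1
  have h1 : Ht = Wtᴴ * A := by
    rw [hWt, hSVD, collapseU, hHt]
    congr 1
    congr 1
    funext j
    simp [mul_comm]
  -- Part 2
  have h2 : Ht.PosSemidef := by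
    rw [hHt]
    refine Matrix.PosSemidef.mul_mul_conjTranspose_same ?_ V
    refine Matrix.PosSemidef.diagonal ?_
    intro j
    simp only [Pi.zero_apply]
    exact_mod_cast mul_nonneg (hσ j) (hrσ j)
  refine ⟨h1, h2, ?_, ?_⟩
  · -- Part 3
    set S := V * Matrix.diagonal (fun j => (σ j : ℂ)) * Vᴴ with hS
    have hSpsd : S.PosSemidef := by
      refine Matrix.PosSemidef.mul_mul_conjTranspose_same ?_ V
      refine Matrix.PosSemidef.diagonal ?_
      intro j
      simp only [Pi.zero_apply]
      exact_mod_cast hσ j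
    have hsq : S ^ 2 = Aᴴ * A := by
      rw [pow_two, hS, collapseVsq, hSVD, collapseU]
      have : (fun j => ((σ j : ℂ)) * (σ j : ℂ)) =
          fun j => star ((σ j : ℂ)) * (σ j : ℂ) := by
        funext j; simp [Complex.star_def, Complex.conj_ofReal]
      rw [this]
    have hsqrt : (Matrix.posSemidef_conjTranspose_mul_self A).sqrt = S :=
      aux_sqrt_eq S _ hSpsd (Matrix.posSemidef_conjTranspose_mul_self A) hsq
    have hdiff : Ht - S = V * Matrix.diagonal
        (fun j => ((σ j * r (σ j) - σ j : ℝ) : ℂ)) * Vᴴ := by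
      rw [hHt, hS, ← Matrix.sub_mul, ← Matrix.mul_sub, Matrix.diagonal_sub]
      have : (fun i => ((σ i * r (σ i) : ℝ) : ℂ) - ((σ i : ℝ) : ℂ)) =
          fun j => ((σ j * r (σ j) - σ j : ℝ) : ℂ) := by
        funext j; (try simp only [Pi.sub_apply]); push_cast; ring
      rw [this]
    rw [hsqrt, hdiff, aux_norm_mul_right V hVc, aux_norm_mul_left V hVc,
      aux_norm_diagonal hn]
    exact Finset.sup'_congr _ rfl
      (fun j _ => by rw [Complex.norm_real, Real.norm_eq_abs])
  · -- Part 4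
    have hWH : Wt * Ht = U * Matrix.diagonal
        (fun j => ((σ j * r (σ j) ^ 2 : ℝ) : ℂ)) * Vᴴ := by
      rw [hWt, hHt, collapseV]
      have : (fun j => ((r (σ j) : ℂ)) * ((σ j * r (σ j) : ℝ) : ℂ)) =
          fun j => ((σ j * r (σ j) ^ 2 : ℝ) : ℂ) := by
        funext j; (try simp only [Pi.sub_apply]); push_cast; ring
      rw [this]
    have hdiff : Wt * Ht - A = U * Matrix.diagonal
        (fun j => ((σ j * r (σ j) ^ 2 - σ j : ℝ) : ℂ)) * Vᴴ := by
      rw [hWH, hSVD, ← Matrix.sub_mul, ← Matrix.mul_sub, Matrix.diagonal_sub]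
      have : (fun i => ((σ i * r (σ i) ^ 2 : ℝ) : ℂ) - ((σ i : ℝ) : ℂ)) =
          fun j => ((σ j * r (σ j) ^ 2 - σ j : ℝ) : ℂ) := by
        funext j; (try simp only [Pi.sub_apply]); push_cast; ring
      rw [this]
    rw [hdiff, aux_norm_mul_right V hVc, aux_norm_mul_left U hU,
      aux_norm_diagonal hn]
    exact Finset.sup'_congr _ rfl
      (fun j _ => by rw [Complex.norm_real, Real.norm_eq_abs])
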